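/- arXiv:2502.05920 — 4 statements merged into one kernel-verified Lean document; each statement's English description precedes it below -/
import Mathlib

section
/- Let Γ be a basic game, let μ be a Bayes correlated Wardrop equilibrium of Γ, and let ψ : Y × Θ → ℝ be continuous. Then for every ε > 0 there exists a direct information structure I such that the obedient interim flow profile of I is a Bayesian Wardrop ε-equilibrium of (Γ, I), and for every θ ∈ Θ, |∫ ψ(y,θ) dμ(y|θ) − ∫ ψ(y,θ) dμ̆_I(y|θ)| ≤ ε, where μ̆_I is the obedient outcome of I. -/
/-!
Round each flow profile `y` of the simplex to a grid point with coordinates in `(1/N)ℕ` (floors of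
`N y`, the missing mass added to a largest coordinate). The direct information structure has `N`
populations of mass `1/N`; in state `θ` it draws `y ∼ μ θ` and recommends a uniformly random
profile whose type counts are the rounded `N y`. Its obedient outcome is the image of `μ θ` under
rounding and, by exchangeability, a population is recommended `a` with probability the rounded
`y a`, so its interim obedience constraints are the ex-ante ones of the rounded outcome. As
`N → ∞` these converge, by dominated convergence, to the BCWE inequalities of `μ`. Rounding keeps
zero coordinates at zero, so only actions with positive mean flow under `μ` are recommended, and
for those the interim probability stays bounded away from zero.
-/

noncomputable section

namespace NonatomicGames

/-- An information structure: finitely many populations with sizes summing to one,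
a finite type set per population, and a signal distribution `π θ` for each state. -/
structure InfoStructure (Θ : Type) where
  K : Type
  [instFintypeK : Fintype K]
  [instDecEqK : DecidableEq K]
  T : K → Type
  [instFintypeT : ∀ k, Fintype (T k)]
  [instDecEqT : ∀ k, DecidableEq (T k)]
  γ : K → ℝ
  γ_pos : ∀ k, 0 < γ k
  γ_sum : ∑ k, γ k = 1
  π : Θ → (∀ k, T k) → ℝ
  π_nonneg : ∀ θ τ, 0 ≤ π θ τ
  π_sum : ∀ θ, ∑ τ, π θ τ = 1

attribute [instance] InfoStructure.instFintypeK InfoStructure.instDecEqK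
  InfoStructure.instFintypeT InfoStructure.instDecEqT

/-- A direct information structure: the type set of each population is the action set `A`. -/
structure DirectInfoStructure (A Θ : Type) [Fintype A] [DecidableEq A] where
  K : Type
  [instFintypeK : Fintype K]
  [instDecEqK : DecidableEq K]
  γ : K → ℝ
  γ_pos : ∀ k, 0 < γ k
  γ_sum : ∑ k, γ k = 1
  π : Θ → (K → A) → ℝ
  π_nonneg : ∀ θ τ, 0 ≤ π θ τ
  π_sum : ∀ θ, ∑ τ, π θ τ = 1

attribute [instance] DirectInfoStructure.instFintypeK DirectInfoStructure.instDecEqK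

section TypeCount

open Finset

variable {ι A : Type*} [Fintype ι] [DecidableEq A]

def typeCount (τ : ι → A) (a : A) : ℕ := #{k | τ k = a}

theorem typeCount_comp_perm (τ : ι → A) (σ : Equiv.Perm ι) : typeCount (τ ∘ σ) = typeCount τ :=
  funext fun _ => card_equiv σ (by simp)

variable [Fintype A]

theorem typeCount_mem_piAntidiag (τ : ι → A) :
    typeCount τ ∈ piAntidiag univ (Fintype.card ι) := by
  rw [mem_piAntidiag]
  refine ⟨?_, by simp⟩
  exact (card_eq_sum_card_fiberwise fun k _ => mem_univ (τ k)).symm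

theorem exists_typeCount_eq {v : A → ℕ} (hv : v ∈ piAntidiag univ (Fintype.card ι)) :
    ∃ τ : ι → A, typeCount τ = v := by
  have hcard : Fintype.card ι = Fintype.card (Σ a, Fin (v a)) := by
    simpa using (mem_piAntidiag.1 hv).1.symm
  let e := Fintype.equivOfCardEq hcard
  refine ⟨fun k => (e k).1, funext fun a => ?_⟩
  calc typeCount (fun k => (e k).1) a = ∑ k, if (e k).1 = a then 1 else 0 := card_filter _ _
    _ = ∑ s : Σ b, Fin (v b), if s.1 = a then 1 else 0 :=
        e.sum_comp fun s => if s.1 = a then 1 else 0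
    _ = v a := by rw [Fintype.sum_sigma]; simp [apply_ite card]

variable [DecidableEq ι]

theorem card_typeCount_fiber_apply_mul_card (v : A → ℕ) (k : ι) (a : A) :
    #{τ : ι → A | typeCount τ = v ∧ τ k = a} * Fintype.card ι
      = v a * #{τ : ι → A | typeCount τ = v} := by
  -- Swapping the coordinates `j` and `k` shows the left count does not depend on `k`; summing it
  -- over `k` counts every profile of type count `v` exactly `v a` times.
  have hswap : ∀ j, #{τ : ι → A | typeCount τ = v ∧ τ j = a}
      = #{τ : ι → A | typeCount τ = v ∧ τ k = a} := fun j =>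
    card_nbij' (· ∘ Equiv.swap j k) (· ∘ Equiv.swap j k)
      (fun τ => by simp [typeCount_comp_perm]) (fun τ => by simp [typeCount_comp_perm])
      (fun τ _ => by simp [Function.comp_def]) (fun τ _ => by simp [Function.comp_def])
  calc #{τ : ι → A | typeCount τ = v ∧ τ k = a} * Fintype.card ι
      = ∑ j, #{τ : ι → A | typeCount τ = v ∧ τ j = a} := by simp [hswap, mul_comm]
    _ = ∑ τ ∈ {τ : ι → A | typeCount τ = v}, #{j | τ j = a} := by
        simp only [card_filter, ← filter_filter]
        exact sum_comm
    _ = v a * #{τ : ι → A | typeCount τ = v} := by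
        rw [sum_congr rfl (g := fun _ => v a) fun τ hτ => congrFun (mem_filter.1 hτ).2 a,
          sum_const, smul_eq_mul, mul_comm]

theorem card_typeCount_fiber_pos {v : A → ℕ} (hv : v ∈ piAntidiag univ (Fintype.card ι)) :
    0 < #{τ : ι → A | typeCount τ = v} := by
  obtain ⟨τ, hτ⟩ := exists_typeCount_eq hv
  exact card_pos.2 ⟨τ, by simp [hτ]⟩

/-- Draw a type count `v` with weight `w v`, then a profile uniformly among those with count `v`. -/
def profileWeight (w : (A → ℕ) → ℝ) (τ : ι → A) : ℝ :=
  w (typeCount τ) / #{σ : ι → A | typeCount σ = typeCount τ}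

theorem sum_profileWeight_mul (w F : (A → ℕ) → ℝ) :
    ∑ τ : ι → A, profileWeight w τ * F (typeCount τ)
      = ∑ v ∈ piAntidiag univ (Fintype.card ι), w v * F v := by
  rw [← sum_fiberwise_of_maps_to fun τ _ => typeCount_mem_piAntidiag τ]
  refine sum_congr rfl fun v hv => ?_
  have hfiber : ∀ τ ∈ ({τ | typeCount τ = v} : Finset (ι → A)),
      profileWeight w τ * F (typeCount τ) = w v / #{σ : ι → A | typeCount σ = v} * F v := by
    intro τ hτ
    simp only [profileWeight, (mem_filter.1 hτ).2]
  have hpos : (0 : ℝ) < #{σ : ι → A | typeCount σ = v} := by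
    exact_mod_cast card_typeCount_fiber_pos hv
  rw [sum_congr rfl hfiber, sum_const, nsmul_eq_mul]
  field_simp

theorem sum_ite_profileWeight_mul (w F : (A → ℕ) → ℝ) (k : ι) (a : A) :
    ∑ τ : ι → A, (if τ k = a then profileWeight w τ * F (typeCount τ) else 0)
      = ∑ v ∈ piAntidiag univ (Fintype.card ι), w v * (v a / Fintype.card ι) * F v := by
  rw [← sum_fiberwise_of_maps_to fun τ _ => typeCount_mem_piAntidiag τ]
  refine sum_congr rfl fun v hv => ?_
  have hfiber : ∀ τ ∈ ({τ | typeCount τ = v} : Finset (ι → A)),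
      (if τ k = a then profileWeight w τ * F (typeCount τ) else 0)
        = if τ k = a then w v / #{σ : ι → A | typeCount σ = v} * F v else 0 := by
    intro τ hτ
    simp only [profileWeight, (mem_filter.1 hτ).2]
  have hpos : (0 : ℝ) < #{σ : ι → A | typeCount σ = v} := by
    exact_mod_cast card_typeCount_fiber_pos hv
  have hcard : (0 : ℝ) < Fintype.card ι := by exact_mod_cast Fintype.card_pos_iff.2 ⟨k⟩
  have hcount : (#{τ : ι → A | typeCount τ = v ∧ τ k = a} : ℝ) * Fintype.card ι
      = v a * #{τ : ι → A | typeCount τ = v} := by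
    exact_mod_cast card_typeCount_fiber_apply_mul_card v k a
  rw [sum_congr rfl hfiber, ← sum_filter, sum_const, nsmul_eq_mul, filter_filter]
  field_simp
  linear_combination (w v * F v) * hcount

end TypeCount

section GridRounding

open Finset Filter Topology

variable {A : Type*} [Fintype A]

def gridPoint (N : ℕ) (v : A → ℕ) : A → ℝ := fun a => (v a : ℝ) / N

theorem sum_floor_mul_le {N : ℕ} {y : A → ℝ} (hy : y ∈ stdSimplex ℝ A) :
    ∑ a, ⌊(N : ℝ) * y a⌋₊ ≤ N := by
  have h : ∑ a, (⌊(N : ℝ) * y a⌋₊ : ℝ) ≤ ∑ a, (N : ℝ) * y a :=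
    sum_le_sum fun a _ => Nat.floor_le (mul_nonneg N.cast_nonneg (hy.1 a))
  rw [← mul_sum, hy.2, mul_one] at h
  exact_mod_cast h

theorem sub_card_lt_sum_floor_mul [Nonempty A] {N : ℕ} {y : A → ℝ} (hy : y ∈ stdSimplex ℝ A) :
    (N : ℝ) - Fintype.card A < ∑ a, (⌊(N : ℝ) * y a⌋₊ : ℝ) := by
  have h : ∑ a, ((N : ℝ) * y a - 1) < ∑ a, (⌊(N : ℝ) * y a⌋₊ : ℝ) :=
    sum_lt_sum_of_nonempty univ_nonempty fun a _ => by
      linarith [Nat.lt_floor_add_one ((N : ℝ) * y a)]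
  rwa [sum_sub_distrib, ← mul_sum, hy.2, mul_one, sum_const, card_univ, nsmul_one] at h

variable [DecidableEq A]

theorem gridPoint_mem_stdSimplex {N : ℕ} (hN : N ≠ 0) {v : A → ℕ} (hv : v ∈ piAntidiag univ N) :
    gridPoint N v ∈ stdSimplex ℝ A := by
  refine ⟨fun a => by unfold gridPoint; positivity, ?_⟩
  have hsum : ∑ a, (v a : ℝ) = N := by exact_mod_cast (mem_piAntidiag.1 hv).1
  simp only [gridPoint, ← sum_div, hsum]
  exact div_self (by exact_mod_cast hN)

variable [Nonempty A]

def padToSum (N : ℕ) (m : A → ℕ) : A → ℕ :=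
  m + Pi.single (Finite.exists_max m).choose (N - ∑ a, m a)

theorem sum_padToSum {N : ℕ} {m : A → ℕ} (h : ∑ a, m a ≤ N) : ∑ a, padToSum N m a = N := by
  simp only [padToSum, Pi.add_apply, sum_add_distrib, Finset.sum_pi_single', mem_univ, if_true]
  omega

theorem le_padToSum (N : ℕ) (m : A → ℕ) (a : A) : m a ≤ padToSum N m a := by
  simp [padToSum]

theorem padToSum_le (N : ℕ) (m : A → ℕ) (a : A) :
    padToSum N m a ≤ m a + (N - ∑ b, m b) := by
  simp only [padToSum, Pi.add_apply, Pi.single_apply]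
  split_ifs <;> omega

theorem padToSum_apply_eq_zero {N : ℕ} {m : A → ℕ} (hm : m ≠ 0) {a : A} (ha : m a = 0) :
    padToSum N m a = 0 := by
  obtain ⟨b, hb⟩ := Function.ne_iff.1 hm
  have hmax := (Finite.exists_max m).choose_spec b
  have hne : a ≠ (Finite.exists_max m).choose := by
    rintro rfl
    simp_all
  simp [padToSum, ha, hne]

def gridRound (N : ℕ) (y : A → ℝ) : A → ℕ := padToSum N fun a => ⌊(N : ℝ) * y a⌋₊

def roundToGrid (N : ℕ) (y : A → ℝ) : A → ℝ := gridPoint N (gridRound N y)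

theorem measurable_gridRound (N : ℕ) : Measurable (gridRound (A := A) N) :=
  (measurable_of_countable (padToSum N)).comp <| measurable_pi_lambda _ fun a =>
    Nat.measurable_floor.comp ((measurable_pi_apply a).const_mul _)

variable {N : ℕ} {y : A → ℝ}

theorem gridRound_mem_piAntidiag (hy : y ∈ stdSimplex ℝ A) :
    gridRound N y ∈ piAntidiag univ N :=
  mem_piAntidiag.2 ⟨sum_padToSum (sum_floor_mul_le hy), by simp⟩

theorem roundToGrid_mem_stdSimplex (hN : N ≠ 0) (hy : y ∈ stdSimplex ℝ A) :
    roundToGrid N y ∈ stdSimplex ℝ A :=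
  gridPoint_mem_stdSimplex hN (gridRound_mem_piAntidiag hy)

theorem abs_gridRound_sub_le (hy : y ∈ stdSimplex ℝ A) (a : A) :
    |(gridRound N y a : ℝ) - N * y a| ≤ Fintype.card A := by
  have hle : (gridRound N y a : ℝ) ≤ ⌊(N : ℝ) * y a⌋₊ + (N - ∑ b, (⌊(N : ℝ) * y b⌋₊ : ℝ)) := by
    rw [← Nat.cast_sum, ← Nat.cast_sub (sum_floor_mul_le hy)]
    exact_mod_cast padToSum_le N (fun b => ⌊(N : ℝ) * y b⌋₊) a
  have hge : (⌊(N : ℝ) * y a⌋₊ : ℝ) ≤ gridRound N y a := by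
    exact_mod_cast le_padToSum N (fun b => ⌊(N : ℝ) * y b⌋₊) a
  have hfloor := Nat.floor_le (mul_nonneg N.cast_nonneg (hy.1 a))
  have hfloor' := Nat.lt_floor_add_one ((N : ℝ) * y a)
  have hsum := sub_card_lt_sum_floor_mul (N := N) hy
  have hcard : (1 : ℝ) ≤ Fintype.card A := by exact_mod_cast Fintype.card_pos
  rw [abs_le]
  constructor <;> linarith

theorem roundToGrid_apply_eq_zero (hy : y ∈ stdSimplex ℝ A) (hN : Fintype.card A ≤ N) {a : A}
    (ha : y a = 0) : roundToGrid N y a = 0 := by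
  -- Some floor `⌊N * y b⌋₊` is positive, so the missing mass goes to a coordinate other than `a`.
  have hzero : gridRound N y a = 0 := by
    refine padToSum_apply_eq_zero (fun h0 => ?_) (by simp [ha])
    have hsum := sub_card_lt_sum_floor_mul (N := N) hy
    have hN' : (Fintype.card A : ℝ) ≤ N := by exact_mod_cast hN
    have hfloor : ∀ b, ⌊(N : ℝ) * y b⌋₊ = 0 := congrFun h0
    simp only [hfloor, Nat.cast_zero, sum_const_zero] at hsum
    linarith
  simp [roundToGrid, gridPoint, hzero]

theorem tendsto_roundToGrid (hy : y ∈ stdSimplex ℝ A) :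
    Tendsto (fun N => roundToGrid N y) atTop (𝓝 y) := by
  refine tendsto_pi_nhds.2 fun a => tendsto_iff_norm_sub_tendsto_zero.2 ?_
  refine squeeze_zero' (Eventually.of_forall fun _ => norm_nonneg _) ?_
    (tendsto_const_div_atTop_nhds_zero_nat (Fintype.card A : ℝ))
  filter_upwards [eventually_gt_atTop 0] with N hN
  have hN' : (0 : ℝ) < N := by exact_mod_cast hN
  have hdiff : roundToGrid N y a - y a = ((gridRound N y a : ℝ) - N * y a) / N := by
    simp only [roundToGrid, gridPoint]
    field_simp
  rw [Real.norm_eq_abs, hdiff, abs_div, abs_of_pos hN']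
  gcongr
  exact abs_gridRound_sub_le hy a

end GridRounding

section Discretization

open Finset Filter Topology MeasureTheory

variable {A : Type*} [Fintype A] {μ : Measure (A → ℝ)} [IsFiniteMeasure μ]

theorem integrable_of_continuousOn_stdSimplex (hμ : ∀ᵐ y ∂μ, y ∈ stdSimplex ℝ A)
    {g : (A → ℝ) → ℝ} (hg : ContinuousOn g (stdSimplex ℝ A)) : Integrable g μ := by
  have h : IntegrableOn g (stdSimplex ℝ A) μ :=
    hg.integrableOn_compact (isCompact_stdSimplex ℝ A)
  rwa [IntegrableOn, Measure.restrict_eq_self_of_ae_mem hμ] at h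

variable [DecidableEq A] [Nonempty A]

theorem integral_comp_gridRound (hμ : ∀ᵐ y ∂μ, y ∈ stdSimplex ℝ A) (N : ℕ)
    (G : (A → ℕ) → ℝ) :
    ∫ y, G (gridRound N y) ∂μ
      = ∑ v ∈ piAntidiag univ N, μ.real (gridRound N ⁻¹' {v}) * G v := by
  have hmeas := measurable_gridRound (A := A) N
  have hV : ∀ᵐ v ∂μ.map (gridRound N), v ∈ (↑(piAntidiag univ N : Finset (A → ℕ)) : Set _) := by
    refine (ae_map_iff hmeas.aemeasurable (piAntidiag univ N).finite_toSet.measurableSet).2 ?_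
    filter_upwards [hμ] with y hy using gridRound_mem_piAntidiag hy
  rw [← integral_map hmeas.aemeasurable (measurable_of_countable G).aestronglyMeasurable,
    ← Measure.restrict_eq_self_of_ae_mem hV, setIntegral_finset _ IntegrableOn.finset]
  simp [map_measureReal_apply hmeas]

theorem tendsto_integral_comp_roundToGrid (hμ : ∀ᵐ y ∂μ, y ∈ stdSimplex ℝ A)
    {g : (A → ℝ) → ℝ} (hg : ContinuousOn g (stdSimplex ℝ A)) :
    Tendsto (fun N => ∫ y, g (roundToGrid N y) ∂μ) atTop (𝓝 (∫ y, g y ∂μ)) := by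
  obtain ⟨C, hC⟩ := (isCompact_stdSimplex ℝ A).exists_bound_of_continuousOn hg
  refine tendsto_integral_filter_of_dominated_convergence (fun _ => C)
    (Eventually.of_forall fun N => ((measurable_of_countable fun v => g (gridPoint N v)).comp
      (measurable_gridRound N)).aestronglyMeasurable) ?_ (integrable_const C) ?_
  · filter_upwards [eventually_ne_atTop 0] with N hN
    filter_upwards [hμ] with y hy using hC _ (roundToGrid_mem_stdSimplex hN hy)
  · filter_upwards [hμ] with y hy
    refine (hg y hy).tendsto.comp (tendsto_nhdsWithin_iff.2 ⟨tendsto_roundToGrid hy, ?_⟩)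
    filter_upwards [eventually_ne_atTop 0] with N hN using roundToGrid_mem_stdSimplex hN hy

theorem ae_roundToGrid_apply_eq_zero (hμ : ∀ᵐ y ∂μ, y ∈ stdSimplex ℝ A) {N : ℕ}
    (hN : Fintype.card A ≤ N) {a : A} (h : ∫ y, y a ∂μ = 0) :
    ∀ᵐ y ∂μ, roundToGrid N y a = 0 := by
  have hint := integrable_of_continuousOn_stdSimplex hμ (continuous_apply a).continuousOn
  have hnonneg : 0 ≤ᵐ[μ] fun y => y a := by filter_upwards [hμ] with y hy using hy.1 a
  filter_upwards [hμ, (integral_eq_zero_iff_of_nonneg_ae hnonneg hint).1 h] with y hy hya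
    using roundToGrid_apply_eq_zero hy hN hya

end Discretization

open MeasureTheory Finset

variable {A Θ : Type} [Fintype A] [DecidableEq A] [Fintype Θ]

/-- The information structure associated with a direct information structure. -/
def DirectInfoStructure.toInfo (I : DirectInfoStructure A Θ) : InfoStructure Θ where
  K := I.K
  instFintypeK := I.instFintypeK
  instDecEqK := I.instDecEqK
  T := fun _ => A
  instFintypeT := fun _ => inferInstanceAs (Fintype A)
  instDecEqT := fun _ => inferInstanceAs (DecidableEq A)
  γ := I.γ
  γ_pos := I.γ_pos
  γ_sum := I.γ_sum
  π := I.π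
  π_nonneg := I.π_nonneg
  π_sum := I.π_sum

/-- The obedient interim flow profile of a direct information structure:
population `k` receiving recommendation `t` puts all its mass `γ k` on action `t`. -/
def DirectInfoStructure.obedient (I : DirectInfoStructure A Θ) :
    ∀ _k : I.K, A → A → ℝ :=
  fun k t a => if t = a then I.γ k else 0

/-- `yhat` is an interim flow profile: nonnegative flows summing to the population sizes. -/
def IsInterim (I : InfoStructure Θ) (yhat : ∀ k, I.T k → A → ℝ) : Prop :=
  (∀ k t a, 0 ≤ yhat k t a) ∧ ∀ k t, ∑ a, yhat k t a = I.γ k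

/-- The interim total flow profile given the type profile `τ`. -/
def totalFlow (I : InfoStructure Θ) (yhat : ∀ k, I.T k → A → ℝ) (τ : ∀ k, I.T k) :
    A → ℝ :=
  fun a => ∑ k, yhat k (τ k) a

/-- The total probability `P(τᵏ)` of type `tk` for population `k`. -/
def typeProb (I : InfoStructure Θ) (p : Θ → ℝ) (k : I.K) (tk : I.T k) : ℝ :=
  ∑ θ, ∑ τ : ∀ j, I.T j, if τ k = tk then p θ * I.π θ τ else 0

/-- Bayesian Wardrop ε-equilibrium of the basic game `(p, c)` extended with `I`. -/
def IsBWEps (I : InfoStructure Θ) (p : Θ → ℝ) (c : A → (A → ℝ) → Θ → ℝ) (ε : ℝ)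
    (yhat : ∀ k, I.T k → A → ℝ) : Prop :=
  IsInterim I yhat ∧
  ∀ (k : I.K) (tk : I.T k), 0 < typeProb I p k tk →
    ∀ a b : A, 0 < yhat k tk a →
      (∑ θ, ∑ τ : ∀ j, I.T j,
        if τ k = tk then
          p θ * I.π θ τ * (c a (totalFlow I yhat τ) θ - c b (totalFlow I yhat τ) θ)
        else 0)
      ≤ ε * typeProb I p k tk

/-- The outcome (state-dependent distribution over flow profiles) induced by `yhat`. -/
def outcomeMeasure (I : InfoStructure Θ) (yhat : ∀ k, I.T k → A → ℝ) (θ : Θ) :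
    Measure (A → ℝ) :=
  ∑ τ : ∀ k, I.T k, ENNReal.ofReal (I.π θ τ) • Measure.dirac (totalFlow I yhat τ)

/-- The probability that the induced outcome puts on the flow profile `z` in state `θ`. -/
def outcomeWeight (I : InfoStructure Θ) (yhat : ∀ k, I.T k → A → ℝ) (θ : Θ)
    (z : A → ℝ) : ℝ :=
  ∑ τ : ∀ k, I.T k, if totalFlow I yhat τ = z then I.π θ τ else 0

/-- The auxiliary (non-normalized interim) cost `C_a^{k,τᵏ}(yhat)`. -/
def auxCost (I : InfoStructure Θ) (p : Θ → ℝ) (c : A → (A → ℝ) → Θ → ℝ)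
    (yhat : ∀ k, I.T k → A → ℝ) (k : I.K) (tk : I.T k) (a : A) : ℝ :=
  ∑ θ, ∑ τ : ∀ j, I.T j,
    if τ k = tk then p θ * I.π θ τ * c a (totalFlow I yhat τ) θ else 0

/-- The potential `Φ_π` of the auxiliary multi-population game. -/
def potPi (I : InfoStructure Θ) (p : Θ → ℝ) (Φ : Θ → (A → ℝ) → ℝ)
    (yhat : ∀ k, I.T k → A → ℝ) : ℝ :=
  ∑ θ, ∑ τ : ∀ k, I.T k, p θ * I.π θ τ * Φ θ (totalFlow I yhat τ)

/-- The social cost `SC(y, θ) = Σ_a y_a c_a(y, θ)`. -/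
def socialCost (c : A → (A → ℝ) → Θ → ℝ) (y : A → ℝ) (θ : Θ) : ℝ :=
  ∑ a, y a * c a y θ

/-- The total cost `TC(yhat)`. -/
def totalCost (I : InfoStructure Θ) (p : Θ → ℝ) (c : A → (A → ℝ) → Θ → ℝ)
    (yhat : ∀ k, I.T k → A → ℝ) : ℝ :=
  ∑ k, ∑ tk : I.T k, ∑ a, yhat k tk a * auxCost I p c yhat k tk a

/-- An outcome: a state-dependent Borel probability measure supported on the simplex `Y`. -/
def IsOutcome (μ : Θ → Measure (A → ℝ)) : Prop :=
  (∀ θ, IsProbabilityMeasure (μ θ)) ∧ ∀ θ, μ θ (stdSimplex ℝ A)ᶜ = 0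

/-- Bayes correlated Wardrop equilibrium of the basic game `(p, c)`. -/
def IsBCWE (p : Θ → ℝ) (c : A → (A → ℝ) → Θ → ℝ) (μ : Θ → Measure (A → ℝ)) : Prop :=
  IsOutcome μ ∧
  ∀ a b : A,
    ∑ θ, p θ * ∫ y, y a * c a y θ ∂(μ θ) ≤ ∑ θ, p θ * ∫ y, y a * c b y θ ∂(μ θ)

/-- `Φ` is a (state-by-state) potential for the cost profile `c`: for each state it is
continuously differentiable on an open neighborhood of the simplex and its partial
derivative in the direction of each action `a` is the cost of `a`. -/
def IsPotential (c : A → (A → ℝ) → Θ → ℝ) (Φ : Θ → (A → ℝ) → ℝ) : Prop :=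
  ∀ θ, ∃ U : Set (A → ℝ), IsOpen U ∧ stdSimplex ℝ A ⊆ U ∧
    ContDiffOn ℝ 1 (Φ θ) U ∧
    ∀ y ∈ stdSimplex ℝ A, ∀ a, fderiv ℝ (Φ θ) y (Pi.single a 1) = c a y θ

section Outcomes

omit [DecidableEq A] [Fintype Θ]

theorem integral_outcomeMeasure (I : InfoStructure Θ) (yhat : ∀ k, I.T k → A → ℝ) (θ : Θ)
    (F : (A → ℝ) → ℝ) :
    ∫ y, F y ∂outcomeMeasure I yhat θ = ∑ τ, I.π θ τ * F (totalFlow I yhat τ) := by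
  rw [outcomeMeasure, integral_finsetSum_measure fun τ _ =>
    (integrable_dirac (by simp)).smul_measure ENNReal.ofReal_ne_top]
  refine sum_congr rfl fun τ _ => ?_
  rw [integral_smul_measure, integral_dirac, ENNReal.toReal_ofReal (I.π_nonneg θ τ), smul_eq_mul]

variable {μ : Θ → Measure (A → ℝ)}

theorem IsOutcome.ae_mem_stdSimplex (hμ : IsOutcome μ) (θ : Θ) :
    ∀ᵐ y ∂μ θ, y ∈ stdSimplex ℝ A :=
  ae_iff.2 (hμ.2 θ)

theorem IsOutcome.nonempty (hμ : IsOutcome μ) (θ : Θ) : Nonempty A := by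
  have := hμ.1 θ
  obtain ⟨y, hy⟩ := (hμ.ae_mem_stdSimplex θ).exists
  by_contra hA
  have := not_nonempty_iff.1 hA
  simpa using hy.2

end Outcomes

omit [DecidableEq A] in
theorem IsBCWE.sum_integral_mul_sub_nonpos {p : Θ → ℝ} {c : A → (A → ℝ) → Θ → ℝ}
    {μ : Θ → Measure (A → ℝ)} (hμ : IsBCWE p c μ)
    (hc : ∀ a θ, ContinuousOn (fun y => c a y θ) (stdSimplex ℝ A)) (a b : A) :
    ∑ θ, p θ * ∫ y, y a * (c a y θ - c b y θ) ∂μ θ ≤ 0 := by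
  have hint : ∀ d θ, Integrable (fun y => y a * c d y θ) (μ θ) := fun d θ =>
    have := hμ.1.1 θ
    integrable_of_continuousOn_stdSimplex (hμ.1.ae_mem_stdSimplex θ)
      ((continuous_apply a).continuousOn.mul (hc d θ))
  simp only [mul_sub, integral_sub (hint a _) (hint b _), sum_sub_distrib]
  exact sub_nonpos.2 (hμ.2 a b)

omit [Fintype Θ] in
theorem DirectInfoStructure.isInterim_obedient (I : DirectInfoStructure A Θ) :
    IsInterim I.toInfo I.obedient := by
  refine ⟨fun k (t : A) a => ?_, fun k (t : A) => ?_⟩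
  · show 0 ≤ I.obedient k t a
    unfold DirectInfoStructure.obedient
    split_ifs
    exacts [(I.γ_pos k).le, le_rfl]
  · show ∑ a, I.obedient k t a = I.γ k
    simp [DirectInfoStructure.obedient]

section Grid

open Filter Topology

variable [Nonempty A] {μ : Θ → Measure (A → ℝ)}

theorem tendsto_sum_mul_integral_comp_roundToGrid (hμ : IsOutcome μ) (p : Θ → ℝ)
    {g : Θ → (A → ℝ) → ℝ} (hg : ∀ θ, ContinuousOn (g θ) (stdSimplex ℝ A)) :
    Tendsto (fun N => ∑ θ, p θ * ∫ y, g θ (roundToGrid N y) ∂μ θ) atTop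
      (𝓝 (∑ θ, p θ * ∫ y, g θ y ∂μ θ)) :=
  tendsto_finsetSum _ fun θ _ =>
    have := hμ.1 θ
    (tendsto_integral_comp_roundToGrid (hμ.ae_mem_stdSimplex θ) (hg θ)).const_mul (p θ)

theorem IsBCWE.eventually_sum_integral_roundToGrid_mul_sub_le {p : Θ → ℝ}
    {c : A → (A → ℝ) → Θ → ℝ} (hμ : IsBCWE p c μ)
    (hc : ∀ a θ, ContinuousOn (fun y => c a y θ) (stdSimplex ℝ A)) {ε : ℝ} (hε : 0 < ε) :
    ∀ᶠ N in atTop, ∀ a b : A, 0 < ∑ θ, p θ * ∫ y, y a ∂μ θ →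
      ∑ θ, p θ * ∫ y, roundToGrid N y a * (c a (roundToGrid N y) θ - c b (roundToGrid N y) θ) ∂μ θ
        ≤ ε * ∑ θ, p θ * ∫ y, roundToGrid N y a ∂μ θ := by
  refine eventually_all.2 fun a => eventually_all.2 fun b =>
    eventually_imp_distrib_left.2 fun ha => ?_
  have hmean := tendsto_sum_mul_integral_comp_roundToGrid hμ.1 p
    fun θ => (continuous_apply a).continuousOn
  have hgap := tendsto_sum_mul_integral_comp_roundToGrid hμ.1 p
    fun θ => (continuous_apply a).continuousOn.mul ((hc a θ).sub (hc b θ))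
  filter_upwards [hmean.eventually_const_lt (half_lt_self ha),
    hgap.eventually_lt_const ((hμ.sum_integral_mul_sub_nonpos hc a b).trans_lt
      (mul_pos hε (half_pos ha)))] with N hmeanN hgapN
  exact hgapN.le.trans (by gcongr)

theorem sum_integral_roundToGrid_apply_eq_zero (hμ : IsOutcome μ) {p : Θ → ℝ}
    (hp : ∀ θ, 0 < p θ) {N : ℕ} (hN : Fintype.card A ≤ N) {a : A} (h : ∑ θ, p θ * ∫ y, y a ∂μ θ ≤ 0) :
    ∑ θ, p θ * ∫ y, roundToGrid N y a ∂μ θ = 0 := by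
  have hnonneg : ∀ θ ∈ univ, 0 ≤ p θ * ∫ y, y a ∂μ θ := fun θ _ =>
    mul_nonneg (hp θ).le <| integral_nonneg_of_ae <| by
      filter_upwards [hμ.ae_mem_stdSimplex θ] with y hy using hy.1 a
  have hzero := (sum_eq_zero_iff_of_nonneg hnonneg).1 (h.antisymm (sum_nonneg hnonneg))
  refine sum_eq_zero fun θ hθ => ?_
  have := hμ.1 θ
  have hya := (mul_eq_zero.1 (hzero θ hθ)).resolve_left (hp θ).ne'
  rw [integral_eq_zero_of_ae (ae_roundToGrid_apply_eq_zero (hμ.ae_mem_stdSimplex θ) hN hya),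
    mul_zero]

variable (hμ : IsOutcome μ) (N : ℕ) [NeZero N]

section

omit [Fintype Θ]

def gridInfo : DirectInfoStructure A Θ where
  K := Fin N
  γ _ := (N : ℝ)⁻¹
  γ_pos _ := inv_pos.2 (Nat.cast_pos.2 (NeZero.pos N))
  γ_sum := by simp
  π θ := profileWeight fun v => (μ θ).real (gridRound N ⁻¹' {v})
  π_nonneg _ _ := div_nonneg measureReal_nonneg (Nat.cast_nonneg _)
  π_sum θ := by
    have := hμ.1 θ
    have h := sum_profileWeight_mul (ι := Fin N) (fun v => (μ θ).real (gridRound N ⁻¹' {v}))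
      fun _ => 1
    rw [Fintype.card_fin, ← integral_comp_gridRound (hμ.ae_mem_stdSimplex θ) N] at h
    simpa using h

theorem totalFlow_gridInfo (τ : Fin N → A) :
    totalFlow (gridInfo hμ N).toInfo (gridInfo hμ N).obedient τ = gridPoint N (typeCount τ) := by
  funext a
  simp only [totalFlow, gridInfo, DirectInfoStructure.toInfo, DirectInfoStructure.obedient]
  rw [← sum_filter, sum_const, nsmul_eq_mul, gridPoint, typeCount, div_eq_mul_inv]
  rfl

theorem sum_gridInfo_π_mul (θ : Θ) (F : (A → ℝ) → ℝ) :
    ∑ τ : Fin N → A, (gridInfo hμ N).π θ τ * F (gridPoint N (typeCount τ))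
      = ∫ y, F (roundToGrid N y) ∂μ θ := by
  have := hμ.1 θ
  refine (sum_profileWeight_mul (ι := Fin N) (fun v => (μ θ).real (gridRound N ⁻¹' {v}))
    (fun v => F (gridPoint N v))).trans ?_
  rw [Fintype.card_fin]
  exact (integral_comp_gridRound (hμ.ae_mem_stdSimplex θ) N _).symm

theorem sum_ite_gridInfo_π_mul (θ : Θ) (k : Fin N) (a : A) (F : (A → ℝ) → ℝ) :
    ∑ τ : Fin N → A,
        (if τ k = a then (gridInfo hμ N).π θ τ * F (gridPoint N (typeCount τ)) else 0)
      = ∫ y, roundToGrid N y a * F (roundToGrid N y) ∂μ θ := by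
  have := hμ.1 θ
  refine (sum_ite_profileWeight_mul (ι := Fin N) (fun v => (μ θ).real (gridRound N ⁻¹' {v}))
    (fun v => F (gridPoint N v)) k a).trans ?_
  rw [Fintype.card_fin]
  refine Eq.trans ?_ (integral_comp_gridRound (hμ.ae_mem_stdSimplex θ) N
    fun v => gridPoint N v a * F (gridPoint N v)).symm
  simp only [gridPoint, mul_assoc]

theorem integral_outcomeMeasure_gridInfo (θ : Θ) (F : (A → ℝ) → ℝ) :
    ∫ y, F y ∂outcomeMeasure (gridInfo hμ N).toInfo (gridInfo hμ N).obedient θ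
      = ∫ y, F (roundToGrid N y) ∂μ θ := by
  refine (integral_outcomeMeasure _ _ θ F).trans ?_
  show ∑ τ : Fin N → A, (gridInfo hμ N).π θ τ *
    F (totalFlow (gridInfo hμ N).toInfo (gridInfo hμ N).obedient τ) = _
  simp only [totalFlow_gridInfo hμ N]
  exact sum_gridInfo_π_mul hμ N θ F

end

theorem isBWEps_gridInfo {p : Θ → ℝ} {c : A → (A → ℝ) → Θ → ℝ} {ε : ℝ}
    (h : ∀ a b : A, 0 < ∑ θ, p θ * ∫ y, roundToGrid N y a ∂μ θ →
      ∑ θ, p θ * ∫ y, roundToGrid N y a * (c a (roundToGrid N y) θ - c b (roundToGrid N y) θ) ∂μ θ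
        ≤ ε * ∑ θ, p θ * ∫ y, roundToGrid N y a ∂μ θ) :
    IsBWEps (gridInfo hμ N).toInfo p c ε (gridInfo hμ N).obedient := by
  have hsum : ∀ (k : Fin N) (a : A) (F : Θ → (A → ℝ) → ℝ),
      ∑ θ, ∑ τ : Fin N → A, (if τ k = a then
          p θ * (gridInfo hμ N).π θ τ * F θ (gridPoint N (typeCount τ)) else 0)
        = ∑ θ, p θ * ∫ y, roundToGrid N y a * F θ (roundToGrid N y) ∂μ θ := fun k a F =>
    sum_congr rfl fun θ _ => by
      rw [← sum_ite_gridInfo_π_mul hμ N θ k a, mul_sum]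
      exact sum_congr rfl fun τ _ => by rw [mul_ite, mul_zero, mul_assoc]
  refine ⟨(gridInfo hμ N).isInterim_obedient, fun (k : Fin N) (t : A) hpos a b hflow => ?_⟩
  obtain rfl : t = a := by
    by_contra hne
    exact hflow.ne (if_neg hne).symm
  have htype : typeProb (gridInfo hμ N).toInfo p k t
      = ∑ θ, p θ * ∫ y, roundToGrid N y t ∂μ θ := by
    show ∑ θ, ∑ τ : Fin N → A, (if τ k = t then p θ * (gridInfo hμ N).π θ τ else 0) = _
    simpa using hsum k t fun _ _ => 1
  rw [htype] at hpos ⊢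
  refine le_of_eq_of_le ?_ (h t b hpos)
  rw [← hsum k t fun θ z => c t z θ - c b z θ]
  show ∑ θ, ∑ τ : Fin N → A, (if τ k = t then p θ * (gridInfo hμ N).π θ τ *
    (c t (totalFlow (gridInfo hμ N).toInfo (gridInfo hμ N).obedient τ) θ
      - c b (totalFlow (gridInfo hμ N).toInfo (gridInfo hμ N).obedient τ) θ) else 0) = _
  simp only [totalFlow_gridInfo hμ N]

end Grid

/-- every BCWE can be ε-implemented by a direct information structure
whose obedient interim flow profile is a Bayesian Wardrop ε-equilibrium. -/
theorem partial_implementation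
    (p : Θ → ℝ) (hp_pos : ∀ θ, 0 < p θ) (hp_sum : ∑ θ, p θ = 1)
    (c : A → (A → ℝ) → Θ → ℝ)
    (hc : ∀ a θ, ContinuousOn (fun y => c a y θ) (stdSimplex ℝ A))
    (μ : Θ → MeasureTheory.Measure (A → ℝ)) (hμ : IsBCWE p c μ)
    (ψ : (A → ℝ) → Θ → ℝ)
    (hψ : ∀ θ, ContinuousOn (fun y => ψ y θ) (stdSimplex ℝ A))
    (ε : ℝ) (hε : 0 < ε) :
    ∃ I : DirectInfoStructure A Θ,
      IsBWEps I.toInfo p c ε I.obedient ∧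
      ∀ θ, |(∫ y, ψ y θ ∂(μ θ)) -
            ∫ y, ψ y θ ∂(outcomeMeasure I.toInfo I.obedient θ)| ≤ ε := by
  obtain ⟨θ₀⟩ : Nonempty Θ := by
    by_contra h
    simp [not_nonempty_iff.1 h] at hp_sum
  have := hμ.1.nonempty θ₀
  have hclose : ∀ θ, ∀ᶠ N in Filter.atTop,
      |∫ y, ψ (roundToGrid N y) θ ∂μ θ - ∫ y, ψ y θ ∂μ θ| < ε := fun θ =>
    have := hμ.1.1 θ
    Metric.tendsto_nhds.1
      (tendsto_integral_comp_roundToGrid (hμ.1.ae_mem_stdSimplex θ) (hψ θ)) ε hε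
  obtain ⟨N, hNA, hNψ, hNobey⟩ := ((Filter.eventually_ge_atTop (Fintype.card A)).and
    ((Filter.eventually_all.2 hclose).and
      (hμ.eventually_sum_integral_roundToGrid_mul_sub_le hc hε))).exists
  have : NeZero N := ⟨(Fintype.card_pos.trans_le hNA).ne'⟩
  refine ⟨gridInfo hμ.1 N, isBWEps_gridInfo hμ.1 N fun a b hpos => ?_, fun θ => ?_⟩
  · by_cases ha : 0 < ∑ θ, p θ * ∫ y, y a ∂μ θ
    · exact hNobey a b ha
    · exact absurd (sum_integral_roundToGrid_apply_eq_zero hμ.1 hp_pos hNA (not_lt.1 ha))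
        hpos.ne'
  · rw [integral_outcomeMeasure_gridInfo, abs_sub_comm]
    exact (hNψ θ).le

end NonatomicGames
end
end

section
/- Let Γ be a basic game and let μ be a Bayes correlated Wardrop equilibrium of Γ whose support is finite and such that every flow profile in the support of every μ(·|θ) has rational coordinates. Then there exists a direct information structure I such that the obedient interim flow profile of I is a Bayesian Wardrop equilibrium (i.e., a Bayesian Wardrop 0-equilibrium) of (Γ, I) and the obedient outcome μ̆_I equals μ. -/
noncomputable section

namespace NonatomicGames

open MeasureTheory Finset

variable {A Θ : Type} [Fintype A] [DecidableEq A] [Fintype Θ]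

/-!
Clear denominators: if every coordinate of every support point is a multiple of `1 / N`, each
support point `y` is the empirical distribution of some `σ_y : Fin N → A`, i.e. of an assignment
of actions to `N` populations of size `1 / N`. In state `θ` the information structure draws `y`
with probability `μ(y | θ)` together with an independent uniform cyclic shift `j`, and recommends
`σ_y (k + j)` to population `k`. The obedient flow is then the drawn `y`, so the obedient outcome
is `μ`; and because of the shift, population `k` is recommended `a` given `y` with probability
`y a`, so its obedience constraint for `a` against `b` is the BCWE inequality for `(a, b)`.
-/

section FiniteSupport

variable {α : Type*} [MeasurableSpace α] [MeasurableSingletonClass α]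

theorem eq_sum_smul_dirac_of_compl_null (ν : Measure α) {t : Finset α}
    (ht : ν (↑t)ᶜ = 0) : ν = ∑ y ∈ t, ν {y} • Measure.dirac y := by
  have hν : ν.restrict (⋃ y ∈ t, {y}) = ν := by
    rw [← Finset.set_biUnion_coe, Set.biUnion_of_singleton]
    exact Measure.restrict_eq_self_of_ae_mem (mem_ae_iff.2 ht)
  conv_lhs => rw [← hν, Measure.restrict_biUnion_finset
    (fun x _ y _ h => Set.disjoint_singleton.2 h) fun _ => measurableSet_singleton _]
  simp [Measure.sum_fintype, Finset.sum_attach t (fun y => ν {y} • Measure.dirac y)]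

theorem integral_eq_sum_of_compl_null (ν : Measure α) [IsFiniteMeasure ν] {t : Finset α}
    (ht : ν (↑t)ᶜ = 0) (f : α → ℝ) : ∫ x, f x ∂ν = ∑ y ∈ t, ν.real {y} * f y := by
  have hν : ν.restrict t = ν := Measure.restrict_eq_self_of_ae_mem (mem_ae_iff.2 ht)
  rw [← hν, setIntegral_finset]
  · simp [hν]
  rw [← Set.biUnion_of_singleton (t : Set α), Finset.set_biUnion_coe]
  simp

end FiniteSupport

theorem exists_nat_mul_eq_intCast {ι : Type*} [Fintype ι] (x : ι → ℝ)
    (hx : ∀ i, ∃ q : ℚ, x i = q) : ∃ N : ℕ, 0 < N ∧ ∀ i, ∃ m : ℤ, (m : ℝ) = N * x i := by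
  choose q hq using hx
  refine ⟨∏ i, (q i).den, Finset.prod_pos fun i _ => (q i).den_pos, fun i => ?_⟩
  obtain ⟨d, hd⟩ := Finset.dvd_prod_of_mem (fun i => (q i).den) (Finset.mem_univ i)
  have hnum : ((q i).den : ℝ) * q i = (q i).num := by exact_mod_cast Rat.den_mul_eq_num (q i)
  refine ⟨d * (q i).num, ?_⟩
  rw [hd, hq i]
  push_cast
  linear_combination (d : ℝ) * hnum.symm

section Empirical

variable {α : Type*} [DecidableEq α] {N : ℕ}

def empirical (σ : Fin N → α) (a : α) : ℝ := #{k | σ k = a} / N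

theorem card_filter_comp_add_right [NeZero N] (σ : Fin N → α) (j : Fin N) (a : α) :
    #{k | σ (k + j) = a} = #{k | σ k = a} :=
  Finset.card_equiv (Equiv.addRight j) (by simp)

theorem empirical_comp_add_right [NeZero N] (σ : Fin N → α) (j : Fin N) :
    empirical (fun k => σ (k + j)) = empirical σ := by
  funext a
  simp only [empirical, card_filter_comp_add_right]

theorem exists_card_filter_eq [Fintype α] (n : α → ℕ) (hn : ∑ a, n a = N) :
    ∃ σ : Fin N → α, ∀ a, #{k | σ k = a} = n a := by
  have e : Fin N ≃ Σ a, Fin (n a) := Fintype.equivOfCardEq (by simp [hn])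
  refine ⟨fun k => (e k).1, fun a => ?_⟩
  rw [Finset.card_equiv e (t := {s | s.1 = a}) (by simp), Finset.card_filter, Fintype.sum_sigma]
  simp [apply_ite Finset.card]

theorem exists_empirical_eq [Fintype α] {y : α → ℝ} (hy : y ∈ stdSimplex ℝ α) (hN : 0 < N)
    (hyN : ∀ a, ∃ m : ℤ, (m : ℝ) = N * y a) : ∃ σ : Fin N → α, empirical σ = y := by
  choose m hm using hyN
  have hmy : ∀ a, ((m a).toNat : ℝ) = N * y a := fun a => by
    have : (0 : ℝ) ≤ m a := hm a ▸ mul_nonneg N.cast_nonneg (hy.1 a)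
    rw [← hm a]
    exact_mod_cast Int.toNat_of_nonneg (by exact_mod_cast this)
  have hsum : ∑ a, (m a).toNat = N := by
    have : ((∑ a, (m a).toNat : ℕ) : ℝ) = N := by
      push_cast [hmy]
      rw [← Finset.mul_sum, hy.2, mul_one]
    exact_mod_cast this
  obtain ⟨σ, hσ⟩ := exists_card_filter_eq _ hsum
  refine ⟨σ, funext fun a => ?_⟩
  rw [empirical, hσ, hmy]
  field_simp

end Empirical

theorem sum_sum_ite_eq_smul {R M β ι : Type*} [Semiring R] [AddCommMonoid M] [Module R M]
    [Fintype β] [DecidableEq β] [Fintype ι] (g : ι → β) (r : ι → R) (F : β → M) :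
    ∑ b, (∑ i, if b = g i then r i else 0) • F b = ∑ i, r i • F (g i) := by
  simp only [Finset.sum_smul, ite_smul, zero_smul]
  rw [Finset.sum_comm]
  simp

theorem DirectInfoStructure.isBWEps_obedient_of_forall (I : DirectInfoStructure A Θ)
    (p : Θ → ℝ) (c : A → (A → ℝ) → Θ → ℝ)
    (h : ∀ k a b, ∑ θ, ∑ τ : I.K → A, (if τ k = a then
      p θ * I.π θ τ * (c a (totalFlow I.toInfo I.obedient τ) θ
        - c b (totalFlow I.toInfo I.obedient τ) θ) else 0) ≤ 0) :
    IsBWEps I.toInfo p c 0 I.obedient := by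
  refine ⟨I.isInterim_obedient, fun k (t : A) _ a b hpos => ?_⟩
  obtain rfl : t = a := by
    by_contra hta
    simp [DirectInfoStructure.obedient, hta] at hpos
  rw [zero_mul]
  exact h k t b

section ShiftMixture

variable {ι : Type*} [Fintype ι] (N : ℕ) [NeZero N] (w : Θ → ι → ℝ)
  (hw0 : ∀ θ i, 0 ≤ w θ i) (hw1 : ∀ θ, ∑ i, w θ i = 1) (σ : ι → Fin N → A)

def shiftMixture : DirectInfoStructure A Θ where
  K := Fin N
  γ _ := (N : ℝ)⁻¹
  γ_pos _ := inv_pos.2 (Nat.cast_pos.2 N.pos_of_neZero)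
  γ_sum := by simp
  π θ τ := ∑ x : ι × Fin N, if τ = (fun k => σ x.1 (k + x.2)) then w θ x.1 / N else 0
  π_nonneg θ τ := Finset.sum_nonneg fun x _ => by
    split_ifs
    exacts [div_nonneg (hw0 θ x.1) N.cast_nonneg, le_rfl]
  π_sum θ := by
    rw [Finset.sum_comm]
    simp [Fintype.sum_prod_type, ← Finset.sum_div, ← Finset.mul_sum, hw1]

omit [Fintype Θ] in
theorem totalFlow_shiftMixture_obedient (τ : Fin N → A) :
    totalFlow (shiftMixture N w hw0 hw1 σ).toInfo (shiftMixture N w hw0 hw1 σ).obedient τ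
      = empirical τ := by
  funext a
  show ∑ k, (if τ k = a then (N : ℝ)⁻¹ else 0) = _
  simp [Finset.sum_ite, empirical, div_eq_mul_inv]

omit [Fintype Θ] in
theorem sum_π_shiftMixture_smul {M : Type*} [AddCommMonoid M] [Module ℝ M] (θ : Θ)
    (F : (Fin N → A) → M) :
    ∑ τ : Fin N → A, (shiftMixture N w hw0 hw1 σ).π θ τ • F τ
      = ∑ i, ∑ j : Fin N, (w θ i / N) • F (fun k => σ i (k + j)) :=
  (sum_sum_ite_eq_smul _ _ F).trans (Fintype.sum_prod_type _)

omit [Fintype Θ] in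
theorem outcomeMeasure_shiftMixture_obedient (θ : Θ) :
    outcomeMeasure (shiftMixture N w hw0 hw1 σ).toInfo (shiftMixture N w hw0 hw1 σ).obedient θ
      = ∑ i, ENNReal.ofReal (w θ i) • Measure.dirac (empirical (σ i)) := by
  have hπ : ∀ τ : Fin N → A, ENNReal.ofReal ((shiftMixture N w hw0 hw1 σ).π θ τ)
      = ∑ x : ι × Fin N, if τ = (fun k => σ x.1 (k + x.2)) then ENNReal.ofReal (w θ x.1 / N)
          else 0 := fun τ => by
    dsimp only [shiftMixture]
    rw [ENNReal.ofReal_sum_of_nonneg]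
    · simp only [apply_ite ENNReal.ofReal, ENNReal.ofReal_zero]
    · intro x _
      split_ifs
      exacts [div_nonneg (hw0 θ x.1) N.cast_nonneg, le_rfl]
  show ∑ τ : Fin N → A, ENNReal.ofReal ((shiftMixture N w hw0 hw1 σ).π θ τ) •
      Measure.dirac (totalFlow (shiftMixture N w hw0 hw1 σ).toInfo
        (shiftMixture N w hw0 hw1 σ).obedient τ) = _
  simp only [hπ]
  rw [sum_sum_ite_eq_smul, Fintype.sum_prod_type]
  refine Finset.sum_congr rfl fun i _ => ?_
  simp only [totalFlow_shiftMixture_obedient, empirical_comp_add_right, Finset.sum_const,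
    Finset.card_univ, Fintype.card_fin, ← smul_assoc]
  rw [nsmul_eq_mul, ← ENNReal.ofReal_natCast, ← ENNReal.ofReal_mul N.cast_nonneg,
    mul_div_cancel₀ _ (NeZero.ne (N : ℝ))]

omit [Fintype Θ] in
theorem sum_ite_π_shiftMixture_mul (θ : Θ) (k : Fin N) (t : A) (G : (A → ℝ) → ℝ) :
    ∑ τ : Fin N → A, (if τ k = t then (shiftMixture N w hw0 hw1 σ).π θ τ * G (empirical τ) else 0)
      = ∑ i, w θ i * empirical (σ i) t * G (empirical (σ i)) := by
  calc _ = ∑ τ : Fin N → A, (shiftMixture N w hw0 hw1 σ).π θ τ •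
        (if τ k = t then G (empirical τ) else 0) := by
          simp only [smul_eq_mul, mul_ite, mul_zero]
    _ = _ := by
      rw [sum_π_shiftMixture_smul]
      refine Finset.sum_congr rfl fun i _ => ?_
      simp only [empirical_comp_add_right, smul_eq_mul, mul_ite, mul_zero]
      rw [Finset.sum_ite, Finset.sum_const_zero, add_zero, Finset.sum_const, nsmul_eq_mul]
      simp_rw [add_comm k]
      rw [card_filter_comp_add_right, empirical]
      ring

theorem isBWEps_shiftMixture_obedient (p : Θ → ℝ) (c : A → (A → ℝ) → Θ → ℝ)
    (h : ∀ a b, ∑ θ, ∑ i, p θ * w θ i * empirical (σ i) a *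
      (c a (empirical (σ i)) θ - c b (empirical (σ i)) θ) ≤ 0) :
    IsBWEps (shiftMixture N w hw0 hw1 σ).toInfo p c 0 (shiftMixture N w hw0 hw1 σ).obedient := by
  refine (shiftMixture N w hw0 hw1 σ).isBWEps_obedient_of_forall p c fun k a b => ?_
  refine le_of_eq_of_le (Finset.sum_congr rfl fun θ _ => ?_) (h a b)
  refine (Finset.sum_congr rfl fun τ _ => ?_).trans
    ((sum_ite_π_shiftMixture_mul N w hw0 hw1 σ θ k a fun y => p θ * (c a y θ - c b y θ)).trans
      (Finset.sum_congr rfl fun i _ => by ring))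
  rw [totalFlow_shiftMixture_obedient N w hw0 hw1 σ τ]
  split_ifs <;> ring

end ShiftMixture

omit [DecidableEq A] in
theorem IsBCWE.sum_sum_measureReal_mul_sub_nonpos {p : Θ → ℝ} {c : A → (A → ℝ) → Θ → ℝ}
    {μ : Θ → Measure (A → ℝ)} (hμ : IsBCWE p c μ) {T : Finset (A → ℝ)}
    (hT : ∀ θ, μ θ (↑T)ᶜ = 0) (a b : A) :
    ∑ θ, ∑ y ∈ T, p θ * (μ θ).real {y} * y a * (c a y θ - c b y θ) ≤ 0 := by
  have hint (θ : Θ) (f : (A → ℝ) → ℝ) : ∫ y, f y ∂(μ θ) = ∑ y ∈ T, (μ θ).real {y} * f y :=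
    have := hμ.1.1 θ
    integral_eq_sum_of_compl_null (μ θ) (hT θ) f
  calc _ = ∑ θ, p θ * ∫ y, y a * c a y θ ∂(μ θ) - ∑ θ, p θ * ∫ y, y a * c b y θ ∂(μ θ) := by
        simp only [hint, Finset.mul_sum, ← Finset.sum_sub_distrib]
        exact Finset.sum_congr rfl fun θ _ => Finset.sum_congr rfl fun y _ => by ring
    _ ≤ 0 := sub_nonpos.2 (hμ.2 a b)

theorem partial_implementation_exact_general
    (p : Θ → ℝ)
    (c : A → (A → ℝ) → Θ → ℝ)
    (μ : Θ → MeasureTheory.Measure (A → ℝ)) (hμ : IsBCWE p c μ)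
    (S : Finset (A → ℝ))
    (hS_rat : ∀ y ∈ S, ∀ a, ∃ q : ℚ, y a = (q : ℝ))
    (hS_supp : ∀ θ, μ θ ((↑S : Set (A → ℝ))ᶜ) = 0) :
    ∃ I : DirectInfoStructure A Θ,
      IsBWEps I.toInfo p c 0 I.obedient ∧
      ∀ θ, μ θ = outcomeMeasure I.toInfo I.obedient θ := by
  classical
  set T := S.filter (· ∈ stdSimplex ℝ A)
  have hT (θ : Θ) : μ θ (↑T)ᶜ = 0 :=
    measure_mono_null (fun y hy => by by_contra h; simp_all [T])
      (measure_union_null (hS_supp θ) (hμ.1.2 θ))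
  obtain ⟨N, hN, hNT⟩ := exists_nat_mul_eq_intCast (fun x : T × A => x.1.1 x.2)
    fun x => hS_rat _ (Finset.mem_filter.1 x.1.2).1 x.2
  have : NeZero N := ⟨hN.ne'⟩
  choose σ hσ using fun y : T =>
    exists_empirical_eq (Finset.mem_filter.1 y.2).2 hN fun a => hNT (y, a)
  have hw1 (θ : Θ) : ∑ y : T, (μ θ).real {y.1} = 1 := by
    have := hμ.1.1 θ
    rw [Finset.sum_coe_sort T fun y => (μ θ).real {y}, sum_measureReal_singleton, measureReal_def,
      (prob_compl_eq_zero_iff T.measurableSet).1 (hT θ), ENNReal.toReal_one]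
  refine ⟨shiftMixture N (fun θ y => (μ θ).real {y.1}) (fun _ _ => measureReal_nonneg) hw1 σ,
    isBWEps_shiftMixture_obedient _ _ _ _ _ p c fun a b => ?_, fun θ => ?_⟩
  · refine le_of_eq_of_le (Finset.sum_congr rfl fun θ _ => ?_)
      (hμ.sum_sum_measureReal_mul_sub_nonpos hT a b)
    simp only [hσ]
    exact Finset.sum_coe_sort T fun y => p θ * (μ θ).real {y} * y a * (c a y θ - c b y θ)
  · rw [outcomeMeasure_shiftMixture_obedient]
    have := hμ.1.1 θ
    simp only [hσ, ofReal_measureReal (measure_ne_top (μ θ) _)]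
    rw [Finset.sum_coe_sort T fun y => μ θ {y} • Measure.dirac y]
    exact eq_sum_smul_dirac_of_compl_null (μ θ) (hT θ)

/-- a BCWE with finite support and rational flows is exactly implemented
by a direct information structure whose obedient profile is a Bayesian Wardrop
equilibrium with obedient outcome equal to the BCWE. -/
theorem partial_implementation_exact
    (p : Θ → ℝ) (hp_pos : ∀ θ, 0 < p θ) (hp_sum : ∑ θ, p θ = 1)
    (c : A → (A → ℝ) → Θ → ℝ)
    (hc : ∀ a θ, ContinuousOn (fun y => c a y θ) (stdSimplex ℝ A))
    (μ : Θ → MeasureTheory.Measure (A → ℝ)) (hμ : IsBCWE p c μ)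
    (S : Finset (A → ℝ))
    (hS_rat : ∀ y ∈ S, ∀ a, ∃ q : ℚ, y a = (q : ℝ))
    (hS_supp : ∀ θ, μ θ ((↑S : Set (A → ℝ))ᶜ) = 0) :
    ∃ I : DirectInfoStructure A Θ,
      IsBWEps I.toInfo p c 0 I.obedient ∧
      ∀ θ, μ θ = outcomeMeasure I.toInfo I.obedient θ :=
  partial_implementation_exact_general p c μ hμ S hS_rat hS_supp

end NonatomicGames
end
end

section
/- Let Γ be a basic game that has a strictly convex potential in each state (i.e., for each θ the potential Φ_θ is strictly convex). Then for every information structure I there is a unique Bayesian Wardrop equilibrium outcome of (Γ, I): any two Bayesian Wardrop equilibria ŷ and ŷ′ of (Γ, I) induce the same outcome, i.e., for every θ ∈ Θ and every z ∈ Y, Σ_{τ : y(τ) = z} π(τ|θ) = Σ_{τ : y′(τ) = z} π(τ|θ). -/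
/-!
A Bayesian Wardrop equilibrium `ŷ` satisfies the variational inequality
`∑_θ ∑_τ p(θ) π(τ|θ) ⟨z(τ) - y(τ), c(y(τ), θ)⟩ ≥ 0` against every interim flow profile `ẑ`,
because each type only uses actions minimizing its interim cost. Testing two equilibria against
each other and adding gives `∑_θ ∑_τ p(θ) π(τ|θ) ⟨y'(τ) - y(τ), c(y'(τ), θ) - c(y(τ), θ)⟩ ≤ 0`,
while the gradient `c(·, θ)` of the strictly convex potential `Φ_θ` is strictly monotone on the
simplex. Hence `y(τ) = y'(τ)` whenever `π(τ|θ) > 0`, so the two outcomes coincide.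
-/

noncomputable section

namespace NonatomicGames

open MeasureTheory Finset

variable {A Θ : Type} [Fintype A] [DecidableEq A] [Fintype Θ]

section ConvexGradient

variable {E : Type*} [NormedAddCommGroup E] [NormedSpace ℝ E] {s : Set E} {f : E → ℝ}
  {L L' : E →L[ℝ] ℝ} {x z : E}

theorem _root_.ConvexOn.add_apply_sub_le_of_hasFDerivAt (hf : ConvexOn ℝ s f) (hx : x ∈ s)
    (hz : z ∈ s) (hL : HasFDerivAt f L x) : f x + L (z - x) ≤ f z := by
  let g : ℝ →ᵃ[ℝ] E := AffineMap.lineMap x z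
  have hg : Set.MapsTo g (Set.Icc 0 1) s := by
    simpa only [g, Set.mapsTo_iff_image_subset, ← segment_eq_image_lineMap]
      using hf.1.segment_subset hx hz
  have hfg : ConvexOn ℝ (Set.Icc 0 1) (f ∘ g) := (hf.comp_affineMap g).subset hg (convex_Icc 0 1)
  have hderiv : HasDerivAt (f ∘ g) (L (z - x)) 0 := by
    have hline : HasDerivAt g (z - x) 0 := AffineMap.hasDerivAt_lineMap
    exact (by simpa [g] using hL : HasFDerivAt f L (g 0)).comp_hasDerivAt 0 hline
  have := hfg.le_slope_of_hasDerivAt (Set.left_mem_Icc.2 zero_le_one)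
    (Set.right_mem_Icc.2 zero_le_one) zero_lt_one hderiv
  simp only [slope_def_field, Function.comp_apply, g, AffineMap.lineMap_apply_zero,
    AffineMap.lineMap_apply_one, sub_zero, div_one] at this
  linarith

theorem _root_.StrictConvexOn.add_apply_sub_lt_of_hasFDerivAt (hf : StrictConvexOn ℝ s f)
    (hx : x ∈ s) (hz : z ∈ s) (hxz : x ≠ z) (hL : HasFDerivAt f L x) : f x + L (z - x) < f z := by
  set m := (2⁻¹ : ℝ) • x + (2⁻¹ : ℝ) • z
  have hm : m ∈ s := hf.1 hx hz (by norm_num) (by norm_num) (by norm_num)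
  have hfm : f m < 2⁻¹ * f x + 2⁻¹ * f z :=
    hf.2 hx hz hxz (by norm_num) (by norm_num) (by norm_num)
  have hmx : m - x = (2⁻¹ : ℝ) • (z - x) := by module
  have := hf.convexOn.add_apply_sub_le_of_hasFDerivAt hx hm hL
  rw [hmx, map_smul, smul_eq_mul] at this
  linarith

theorem _root_.StrictConvexOn.apply_sub_lt_apply_sub_of_hasFDerivAt (hf : StrictConvexOn ℝ s f)
    (hx : x ∈ s) (hz : z ∈ s) (hxz : x ≠ z) (hL : HasFDerivAt f L x)
    (hL' : HasFDerivAt f L' z) : L (z - x) < L' (z - x) := by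
  have hzx := hf.add_apply_sub_lt_of_hasFDerivAt hz hx hxz.symm hL'
  rw [← neg_sub, map_neg] at hzx
  linarith [hf.add_apply_sub_lt_of_hasFDerivAt hx hz hxz hL]

end ConvexGradient

section Potential

variable {c : A → (A → ℝ) → Θ → ℝ} {Φ : Θ → (A → ℝ) → ℝ} {x z : A → ℝ}

omit [Fintype Θ] in
theorem IsPotential.hasFDerivAt (hΦ : IsPotential c Φ) (θ : Θ) (hx : x ∈ stdSimplex ℝ A) :
    HasFDerivAt (Φ θ) (fderiv ℝ (Φ θ) x) x := by
  obtain ⟨U, hU, hsU, hΦU, -⟩ := hΦ θ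
  exact ((hΦU.contDiffAt (hU.mem_nhds (hsU hx))).differentiableAt one_ne_zero).hasFDerivAt

omit [Fintype Θ] in
theorem IsPotential.fderiv_apply (hΦ : IsPotential c Φ) (θ : Θ) (hx : x ∈ stdSimplex ℝ A)
    (v : A → ℝ) : fderiv ℝ (Φ θ) x v = ∑ a, v a * c a x θ := by
  obtain ⟨-, -, -, -, hgrad⟩ := hΦ θ
  conv_lhs => rw [pi_eq_sum_univ' v]
  simp only [map_sum, map_smul, smul_eq_mul, hgrad x hx]

omit [Fintype Θ] in
theorem IsPotential.sum_sub_mul_cost_sub_pos (hΦ : IsPotential c Φ) {θ : Θ}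
    (hconv : StrictConvexOn ℝ (stdSimplex ℝ A) (Φ θ)) (hx : x ∈ stdSimplex ℝ A)
    (hz : z ∈ stdSimplex ℝ A) (hxz : x ≠ z) :
    0 < ∑ a, (z a - x a) * (c a z θ - c a x θ) := by
  have := hconv.apply_sub_lt_apply_sub_of_hasFDerivAt hx hz hxz (hΦ.hasFDerivAt θ hx)
    (hΦ.hasFDerivAt θ hz)
  simp only [hΦ.fderiv_apply θ hx, hΦ.fderiv_apply θ hz, Pi.sub_apply] at this
  simpa only [mul_sub, Finset.sum_sub_distrib, sub_pos] using this

end Potential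

theorem sum_sub_mul_nonneg_of_support_argmin {ι : Type*} [Fintype ι] {y z C : ι → ℝ}
    (hy : ∀ i, 0 ≤ y i) (hz : ∀ i, 0 ≤ z i) (hyz : ∑ i, z i = ∑ i, y i)
    (hC : ∀ i j, 0 < y i → C i ≤ C j) : 0 ≤ ∑ i, (z i - y i) * C i := by
  by_cases hpos : ∃ i₀, 0 < y i₀
  · obtain ⟨i₀, hi₀⟩ := hpos
    have hyC : ∑ i, y i * C i = ∑ i, y i * C i₀ := by
      refine Finset.sum_congr rfl fun i _ => ?_
      rcases (hy i).eq_or_lt with hi | hi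
      · rw [← hi, zero_mul, zero_mul]
      · rw [le_antisymm (hC i i₀ hi) (hC i₀ i hi₀)]
    have hzC : ∑ i, z i * C i₀ ≤ ∑ i, z i * C i :=
      Finset.sum_le_sum fun i _ => mul_le_mul_of_nonneg_left (hC i₀ i hi₀) (hz i)
    simp only [sub_mul, Finset.sum_sub_distrib, hyC, ← Finset.sum_mul, hyz] at hzC ⊢
    linarith
  · simp only [not_exists, not_lt] at hpos
    have hy0 : ∀ i, y i = 0 := fun i => le_antisymm (hpos i) (hy i)
    have hz0 : ∀ i, z i = 0 := by
      simpa [hy0, Finset.sum_eq_zero_iff_of_nonneg fun i _ => hz i] using hyz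
    simp [hy0, hz0]

section Equilibrium

variable {I : InfoStructure Θ} {p : Θ → ℝ} {c : A → (A → ℝ) → Θ → ℝ}
  {yhat yhat' zhat : ∀ k, I.T k → A → ℝ}

omit [DecidableEq A] [Fintype Θ] in
theorem IsInterim.totalFlow_mem_stdSimplex (hy : IsInterim I yhat) (τ : ∀ k, I.T k) :
    totalFlow I yhat τ ∈ stdSimplex ℝ A := by
  refine ⟨fun a => Finset.sum_nonneg fun k _ => hy.1 k (τ k) a, ?_⟩
  simp only [totalFlow]
  rw [Finset.sum_comm]
  simp only [hy.2, I.γ_sum]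

omit [Fintype A] [DecidableEq A] in
theorem auxCost_eq_zero_of_typeProb_eq_zero (hp : ∀ θ, 0 ≤ p θ) {k : I.K} {tk : I.T k}
    (h0 : typeProb I p k tk = 0) (a : A) : auxCost I p c yhat k tk a = 0 := by
  have hnonneg : ∀ θ (τ : ∀ j, I.T j), 0 ≤ if τ k = tk then p θ * I.π θ τ else 0 :=
    fun θ τ => ite_nonneg (mul_nonneg (hp θ) (I.π_nonneg θ τ)) le_rfl
  have hterm : ∀ θ (τ : ∀ j, I.T j), τ k = tk → p θ * I.π θ τ = 0 := by
    intro θ τ hτ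
    rw [typeProb, Finset.sum_eq_zero_iff_of_nonneg fun θ _ =>
      Finset.sum_nonneg fun τ _ => hnonneg θ τ] at h0
    have := (Finset.sum_eq_zero_iff_of_nonneg fun τ _ => hnonneg θ τ).1
      (h0 θ (Finset.mem_univ θ)) τ (Finset.mem_univ τ)
    rwa [if_pos hτ] at this
  refine Finset.sum_eq_zero fun θ _ => Finset.sum_eq_zero fun τ _ => ?_
  split_ifs with hτ
  · rw [hterm θ τ hτ, zero_mul]
  · rfl

omit [DecidableEq A] in
theorem IsBWEps.auxCost_le (hp : ∀ θ, 0 ≤ p θ) (h : IsBWEps I p c 0 yhat) {k : I.K}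
    {tk : I.T k} {a : A} (ha : 0 < yhat k tk a) (b : A) :
    auxCost I p c yhat k tk a ≤ auxCost I p c yhat k tk b := by
  have hP : 0 ≤ typeProb I p k tk := Finset.sum_nonneg fun θ _ => Finset.sum_nonneg fun τ _ =>
    ite_nonneg (mul_nonneg (hp θ) (I.π_nonneg θ τ)) le_rfl
  rcases hP.eq_or_lt with hP | hP
  · simp only [auxCost_eq_zero_of_typeProb_eq_zero hp hP.symm, le_refl]
  · have hdiff : auxCost I p c yhat k tk a - auxCost I p c yhat k tk b ≤ 0 := by
      refine le_of_eq_of_le ?_ ((h.2 k tk hP a b ha).trans_eq (zero_mul _))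
      simp only [auxCost, ← Finset.sum_sub_distrib]
      refine Finset.sum_congr rfl fun θ _ => Finset.sum_congr rfl fun τ _ => ?_
      split_ifs <;> ring
    linarith

omit [DecidableEq A] in
theorem sum_mul_auxCost (w : ∀ k, I.T k → A → ℝ) :
    ∑ k, ∑ tk, ∑ a, w k tk a * auxCost I p c yhat k tk a =
      ∑ θ, ∑ τ, p θ * I.π θ τ * ∑ a, totalFlow I w τ a * c a (totalFlow I yhat τ) θ := by
  calc ∑ k, ∑ tk, ∑ a, w k tk a * auxCost I p c yhat k tk a
      = ∑ k, ∑ a, ∑ θ, ∑ τ : ∀ j, I.T j,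
          p θ * I.π θ τ * (w k (τ k) a * c a (totalFlow I yhat τ) θ) := by
        refine Finset.sum_congr rfl fun k _ => ?_
        rw [Finset.sum_comm]
        refine Finset.sum_congr rfl fun a _ => ?_
        simp only [auxCost, Finset.mul_sum, mul_ite, mul_zero]
        rw [Finset.sum_comm]
        refine Finset.sum_congr rfl fun θ _ => ?_
        rw [Finset.sum_comm]
        refine Finset.sum_congr rfl fun τ _ => ?_
        rw [Finset.sum_ite_eq, if_pos (Finset.mem_univ _)]
        ring
    _ = _ := by
        simp only [totalFlow, Finset.sum_mul, Finset.mul_sum]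
        have hinner : ∀ k, ∑ a, ∑ θ, ∑ τ : ∀ j, I.T j,
            p θ * I.π θ τ * (w k (τ k) a * c a (totalFlow I yhat τ) θ) =
              ∑ θ, ∑ τ : ∀ j, I.T j, ∑ a,
                p θ * I.π θ τ * (w k (τ k) a * c a (totalFlow I yhat τ) θ) := fun k => by
          rw [Finset.sum_comm]
          exact Finset.sum_congr rfl fun θ _ => Finset.sum_comm
        simp only [hinner]
        rw [Finset.sum_comm]
        refine Finset.sum_congr rfl fun θ _ => ?_
        rw [Finset.sum_comm]
        exact Finset.sum_congr rfl fun τ _ => Finset.sum_comm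

omit [DecidableEq A] in
theorem IsBWEps.variational_inequality (hp : ∀ θ, 0 ≤ p θ) (h : IsBWEps I p c 0 yhat)
    (hz : IsInterim I zhat) :
    0 ≤ ∑ θ, ∑ τ, p θ * I.π θ τ *
      ∑ a, (totalFlow I zhat τ a - totalFlow I yhat τ a) * c a (totalFlow I yhat τ) θ := by
  have hdiff : ∀ τ a, totalFlow I zhat τ a - totalFlow I yhat τ a =
      totalFlow I (fun k tk a => zhat k tk a - yhat k tk a) τ a :=
    fun τ a => (Finset.sum_sub_distrib _ _).symm
  simp only [hdiff, ← sum_mul_auxCost]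
  exact Finset.sum_nonneg fun k _ => Finset.sum_nonneg fun tk _ =>
    sum_sub_mul_nonneg_of_support_argmin (h.1.1 k tk) (hz.1 k tk) (by rw [hz.2, h.1.2])
      fun a b ha => h.auxCost_le hp ha b

omit [DecidableEq A] in
theorem IsBWEps.sum_mul_sum_sub_mul_cost_sub_nonpos (hp : ∀ θ, 0 ≤ p θ)
    (h : IsBWEps I p c 0 yhat) (h' : IsBWEps I p c 0 yhat') :
    ∑ θ, ∑ τ, p θ * I.π θ τ * ∑ a, (totalFlow I yhat' τ a - totalFlow I yhat τ a) *
      (c a (totalFlow I yhat' τ) θ - c a (totalFlow I yhat τ) θ) ≤ 0 := by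
  refine neg_nonneg.1 ((add_nonneg (h.variational_inequality hp h'.1)
    (h'.variational_inequality hp h.1)).trans_eq ?_)
  simp only [← Finset.sum_add_distrib, ← Finset.sum_neg_distrib, ← mul_add, ← mul_neg]
  refine Finset.sum_congr rfl fun θ _ => Finset.sum_congr rfl fun τ _ => ?_
  congr 1
  exact Finset.sum_congr rfl fun a _ => by ring

theorem IsBWEps.totalFlow_eq_of_pos {Φ : Θ → (A → ℝ) → ℝ} (hp : ∀ θ, 0 < p θ)
    (hΦ : IsPotential c Φ) (hconv : ∀ θ, StrictConvexOn ℝ (stdSimplex ℝ A) (Φ θ))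
    (h : IsBWEps I p c 0 yhat) (h' : IsBWEps I p c 0 yhat') {θ : Θ} {τ : ∀ k, I.T k}
    (hπ : 0 < I.π θ τ) : totalFlow I yhat τ = totalFlow I yhat' τ := by
  have hsum := h.sum_mul_sum_sub_mul_cost_sub_nonpos (fun θ => (hp θ).le) h'
  set y := totalFlow I yhat
  set y' := totalFlow I yhat'
  have hgap : ∀ {θ τ}, y τ ≠ y' τ → 0 < ∑ a, (y' τ a - y τ a) * (c a (y' τ) θ - c a (y τ) θ) :=
    fun hyy' => hΦ.sum_sub_mul_cost_sub_pos (hconv _) (h.1.totalFlow_mem_stdSimplex _)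
      (h'.1.totalFlow_mem_stdSimplex _) hyy'
  have hterm : ∀ θ τ,
      0 ≤ p θ * I.π θ τ * ∑ a, (y' τ a - y τ a) * (c a (y' τ) θ - c a (y τ) θ) := by
    intro θ τ
    refine mul_nonneg (mul_nonneg (hp θ).le (I.π_nonneg θ τ)) ?_
    by_cases hyy' : y τ = y' τ
    · simp only [hyy', sub_self, zero_mul, Finset.sum_const_zero, le_refl]
    · exact (hgap hyy').le
  have hzero := (Finset.sum_eq_zero_iff_of_nonneg fun τ _ => hterm θ τ).1
    ((Finset.sum_eq_zero_iff_of_nonneg fun θ _ => Finset.sum_nonneg fun τ _ => hterm θ τ).1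
      (hsum.antisymm (Finset.sum_nonneg fun θ _ => Finset.sum_nonneg fun τ _ => hterm θ τ))
      θ (Finset.mem_univ θ)) τ (Finset.mem_univ τ)
  by_contra hyy'
  exact (mul_pos (mul_pos (hp θ) hπ) (hgap hyy')).ne' hzero

omit [DecidableEq A] [Fintype Θ] in
theorem outcomeWeight_congr {θ : Θ}
    (h : ∀ τ, 0 < I.π θ τ → totalFlow I yhat τ = totalFlow I yhat' τ) (z : A → ℝ) :
    outcomeWeight I yhat θ z = outcomeWeight I yhat' θ z := by
  refine Finset.sum_congr rfl fun τ _ => ?_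
  rcases (I.π_nonneg θ τ).eq_or_lt with hπ | hπ
  · simp [← hπ]
  · rw [h τ hπ]

end Equilibrium

theorem unique_BWE_outcome_general
    (p : Θ → ℝ) (hp_pos : ∀ θ, 0 < p θ)
    (c : A → (A → ℝ) → Θ → ℝ)
    (Φ : Θ → (A → ℝ) → ℝ) (hΦ : IsPotential c Φ)
    (hconv : ∀ θ, StrictConvexOn ℝ (stdSimplex ℝ A) (Φ θ))
    (I : InfoStructure Θ)
    (yhat yhat' : ∀ k, I.T k → A → ℝ)
    (h : IsBWEps I p c 0 yhat) (h' : IsBWEps I p c 0 yhat') :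
    ∀ (θ : Θ) (z : A → ℝ), outcomeWeight I yhat θ z = outcomeWeight I yhat' θ z :=
  fun _ => outcomeWeight_congr fun _ hπ => h.totalFlow_eq_of_pos hp_pos hΦ hconv h' hπ

/-- with a strictly convex potential in each state, the Bayesian Wardrop
equilibrium outcome of `(Γ, I)` is unique. -/
theorem unique_BWE_outcome
    (p : Θ → ℝ) (hp_pos : ∀ θ, 0 < p θ) (hp_sum : ∑ θ, p θ = 1)
    (c : A → (A → ℝ) → Θ → ℝ)
    (hc : ∀ a θ, ContinuousOn (fun y => c a y θ) (stdSimplex ℝ A))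
    (Φ : Θ → (A → ℝ) → ℝ) (hΦ : IsPotential c Φ)
    (hconv : ∀ θ, StrictConvexOn ℝ (stdSimplex ℝ A) (Φ θ))
    (I : InfoStructure Θ)
    (yhat yhat' : ∀ k, I.T k → A → ℝ)
    (h : IsBWEps I p c 0 yhat) (h' : IsBWEps I p c 0 yhat') :
    ∀ (θ : Θ) (z : A → ℝ), outcomeWeight I yhat θ z = outcomeWeight I yhat' θ z :=
  unique_BWE_outcome_general p hp_pos c Φ hΦ hconv I yhat yhat' h h'

end NonatomicGames
end
end

section
/- Let Γ be a basic game and I any information structure. Then every Bayesian Wardrop equilibrium outcome of (Γ, I) is a Bayes correlated Wardrop equilibrium of Γ: if ŷ is a Bayesian Wardrop equilibrium of (Γ, I) and μ̂ is its outcome, then for all actions a, b ∈ A, Σ_θ p(θ) Σ_τ π(τ|θ) y_a(τ) c_a(y(τ), θ) ≤ Σ_θ p(θ) Σ_τ π(τ|θ) y_a(τ) c_b(y(τ), θ). -/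
noncomputable section

namespace NonatomicGames

open MeasureTheory Finset

variable {A Θ : Type} [Fintype A] [DecidableEq A] [Fintype Θ]

/-- every Bayesian Wardrop equilibrium outcome of `(Γ, I)` is a Bayes
correlated Wardrop equilibrium of `Γ` (obedience inequalities for the outcome). -/
theorem BWE_outcome_is_BCWE
    (p : Θ → ℝ) (hp_pos : ∀ θ, 0 < p θ) (hp_sum : ∑ θ, p θ = 1)
    (c : A → (A → ℝ) → Θ → ℝ)
    (hc : ∀ a θ, ContinuousOn (fun y => c a y θ) (stdSimplex ℝ A))
    (I : InfoStructure Θ)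
    (yhat : ∀ k, I.T k → A → ℝ) (h : IsBWEps I p c 0 yhat)
    (a b : A) :
    ∑ θ, p θ * ∑ τ : ∀ k, I.T k,
        I.π θ τ * (totalFlow I yhat τ a * c a (totalFlow I yhat τ) θ) ≤
      ∑ θ, p θ * ∑ τ : ∀ k, I.T k,
        I.π θ τ * (totalFlow I yhat τ a * c b (totalFlow I yhat τ) θ) := by

  classical
  obtain ⟨⟨hy_nonneg, hy_sum⟩, hbwe⟩ := h
  -- key per-(k,tk) inequality
  have key : ∀ (k : I.K) (tk : I.T k), yhat k tk a *
      (∑ θ, ∑ τ : ∀ j, I.T j, if τ k = tk then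
        p θ * I.π θ τ * (c a (totalFlow I yhat τ) θ - c b (totalFlow I yhat τ) θ)
      else 0) ≤ 0 := by
    intro k tk
    rcases eq_or_lt_of_le (hy_nonneg k tk a) with h0 | hpos
    · rw [← h0, zero_mul]
    rcases le_or_gt (typeProb I p k tk) 0 with hP | hP
    · -- typeProb is a sum of nonneg terms; ≤ 0 forces every term to vanish
      have hterm : ∀ θ (τ : ∀ j, I.T j), τ k = tk → p θ * I.π θ τ = 0 := by
        intro θ τ hτ
        have hnn : ∀ θ' ∈ (Finset.univ : Finset Θ),
            0 ≤ ∑ τ' : ∀ j, I.T j, if τ' k = tk then p θ' * I.π θ' τ' else 0 := by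
          intro θ' _
          refine Finset.sum_nonneg fun τ' _ => ?_
          split
          · exact mul_nonneg (hp_pos θ').le (I.π_nonneg θ' τ')
          · exact le_refl 0
        have hP0 : typeProb I p k tk = 0 :=
          le_antisymm hP (Finset.sum_nonneg hnn)
        have h1 := (Finset.sum_eq_zero_iff_of_nonneg hnn).mp hP0 θ (Finset.mem_univ θ)
        have hnn2 : ∀ τ' ∈ (Finset.univ : Finset (∀ j, I.T j)),
            0 ≤ (if τ' k = tk then p θ * I.π θ τ' else 0) := by
          intro τ' _
          split
          · exact mul_nonneg (hp_pos θ).le (I.π_nonneg θ τ')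
          · exact le_refl 0
        have h2 := (Finset.sum_eq_zero_iff_of_nonneg hnn2).mp h1 τ (Finset.mem_univ τ)
        rwa [if_pos hτ] at h2
      have hS : (∑ θ, ∑ τ : ∀ j, I.T j, if τ k = tk then
          p θ * I.π θ τ * (c a (totalFlow I yhat τ) θ - c b (totalFlow I yhat τ) θ)
          else 0) = 0 := by
        refine Finset.sum_eq_zero fun θ _ => Finset.sum_eq_zero fun τ _ => ?_
        by_cases hτ : τ k = tk
        · rw [if_pos hτ, hterm θ τ hτ, zero_mul]
        · rw [if_neg hτ]
      rw [hS, mul_zero]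
    · have hb := hbwe k tk hP a b hpos
      rw [zero_mul] at hb
      exact mul_nonpos_of_nonneg_of_nonpos (hy_nonneg k tk a) hb
  -- swap lemma
  have hswap : ∀ X : Θ → (∀ k, I.T k) → ℝ,
      (∑ θ, p θ * ∑ τ : ∀ j, I.T j, I.π θ τ * (totalFlow I yhat τ a * X θ τ))
      = ∑ k, ∑ tk : I.T k, yhat k tk a *
          ∑ θ, ∑ τ : ∀ j, I.T j, if τ k = tk then p θ * I.π θ τ * X θ τ else 0 := by
    intro X
    calc (∑ θ, p θ * ∑ τ : ∀ j, I.T j, I.π θ τ * (totalFlow I yhat τ a * X θ τ))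
        = ∑ θ, ∑ τ : ∀ j, I.T j, ∑ k, yhat k (τ k) a * (p θ * I.π θ τ * X θ τ) := by
          refine Finset.sum_congr rfl fun θ _ => ?_
          rw [Finset.mul_sum]
          refine Finset.sum_congr rfl fun τ _ => ?_
          simp only [totalFlow, Finset.sum_mul, Finset.mul_sum]
          exact Finset.sum_congr rfl fun k _ => by ring
      _ = ∑ k, ∑ θ, ∑ τ : ∀ j, I.T j, yhat k (τ k) a * (p θ * I.π θ τ * X θ τ) := by
          have h1 : ∀ θ : Θ, (∑ τ : ∀ j, I.T j, ∑ k, yhat k (τ k) a * (p θ * I.π θ τ * X θ τ))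
              = ∑ k, ∑ τ : ∀ j, I.T j, yhat k (τ k) a * (p θ * I.π θ τ * X θ τ) :=
            fun θ => Finset.sum_comm
          simp only [h1]
          exact Finset.sum_comm
      _ = ∑ k, ∑ θ, ∑ τ : ∀ j, I.T j, ∑ tk : I.T k,
            if τ k = tk then yhat k tk a * (p θ * I.π θ τ * X θ τ) else 0 := by
          refine Finset.sum_congr rfl fun k _ => Finset.sum_congr rfl fun θ _ =>
            Finset.sum_congr rfl fun τ _ => ?_
          rw [Finset.sum_ite_eq Finset.univ (τ k)
            (fun tk => yhat k tk a * (p θ * I.π θ τ * X θ τ)), if_pos (Finset.mem_univ _)]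
      _ = ∑ k, ∑ tk : I.T k, ∑ θ, ∑ τ : ∀ j, I.T j,
            if τ k = tk then yhat k tk a * (p θ * I.π θ τ * X θ τ) else 0 := by
          refine Finset.sum_congr rfl fun k _ => ?_
          have h1 : ∀ θ : Θ, (∑ τ : ∀ j, I.T j, ∑ tk : I.T k,
              if τ k = tk then yhat k tk a * (p θ * I.π θ τ * X θ τ) else 0)
              = ∑ tk : I.T k, ∑ τ : ∀ j, I.T j,
              if τ k = tk then yhat k tk a * (p θ * I.π θ τ * X θ τ) else 0 :=
            fun θ => Finset.sum_comm
          simp only [h1]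
          exact Finset.sum_comm
      _ = ∑ k, ∑ tk : I.T k, yhat k tk a *
            ∑ θ, ∑ τ : ∀ j, I.T j, if τ k = tk then p θ * I.π θ τ * X θ τ else 0 := by
          refine Finset.sum_congr rfl fun k _ => Finset.sum_congr rfl fun tk _ => ?_
          rw [Finset.mul_sum]
          refine Finset.sum_congr rfl fun θ _ => ?_
          rw [Finset.mul_sum]
          refine Finset.sum_congr rfl fun τ _ => ?_
          rw [mul_ite, mul_zero]
  rw [hswap (fun θ τ => c a (totalFlow I yhat τ) θ),
    hswap (fun θ τ => c b (totalFlow I yhat τ) θ)]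
  refine Finset.sum_le_sum fun k _ => Finset.sum_le_sum fun tk _ => ?_
  have hkey := key k tk
  have hdiff : (∑ θ, ∑ τ : ∀ j, I.T j, if τ k = tk then
      p θ * I.π θ τ * (c a (totalFlow I yhat τ) θ - c b (totalFlow I yhat τ) θ) else 0)
    = (∑ θ, ∑ τ : ∀ j, I.T j, if τ k = tk then
        p θ * I.π θ τ * c a (totalFlow I yhat τ) θ else 0)
      - (∑ θ, ∑ τ : ∀ j, I.T j, if τ k = tk then
        p θ * I.π θ τ * c b (totalFlow I yhat τ) θ else 0) := by
    rw [← Finset.sum_sub_distrib]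
    refine Finset.sum_congr rfl fun θ _ => ?_
    rw [← Finset.sum_sub_distrib]
    refine Finset.sum_congr rfl fun τ _ => ?_
    by_cases hτ : τ k = tk
    · simp only [if_pos hτ]; ring
    · simp only [if_neg hτ, sub_zero]
  rw [hdiff, mul_sub] at hkey
  linarith

end NonatomicGames
end
end
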